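/- arXiv:2304.13761 — 5 statements merged into one kernel-verified Lean document; each statement's English description precedes it below -/
import Mathlib

section
/- Let y ∈ ℝⁿ, Φ ∈ ℝ^{n×p}, c ≥ 0, and let 𝒰₁ = {ΔΦ ∈ ℝ^{n×p} : ‖ΔΦ‖₂ ≤ c‖β‖₂} (operator norm, depending on β). Then for every β ∈ ℝᵖ with y ≠ Φβ, max_{ΔΦ ∈ 𝒰₁} ‖y − (Φ + ΔΦ)β‖₂ = ‖y − Φβ‖₂ + c‖β‖₂². Consequently the robust regression problem min_β max_{ΔΦ ∈ 𝒰₁} ‖y − (Φ+ΔΦ)β‖₂ is equivalent to the L2-regularized problem min_β { ‖y − Φβ‖₂ + c‖β‖₂² }. -/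
/-!
The triangle inequality and `‖D β‖ ≤ ‖D‖ ‖β‖` bound the loss by `‖y - Φ β‖ + c ‖β‖²`. The bound is
attained by the rank-one perturbation `D x = -c ⟪β, x⟫ u`, where `u` is the unit vector along the
residual `y - Φ β`: it has operator norm `c ‖β‖` and pushes the residual further along itself by
exactly `c ‖β‖²`. Once the worst-case loss equals the regularized loss for every `β`, the two
minimization problems have the same minimizers.
-/

open ContinuousLinearMap

section WorstCase

variable {E F : Type*} [NormedAddCommGroup E] [NormedAddCommGroup F] [NormedSpace ℝ F]

theorem norm_sub_add_apply_le [NormedSpace ℝ E] (y : F) (Φ D : E →L[ℝ] F) (β : E) {c : ℝ}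
    (hD : ‖D‖ ≤ c * ‖β‖) : ‖y - (Φ + D) β‖ ≤ ‖y - Φ β‖ + c * ‖β‖ ^ 2 :=
  calc ‖y - (Φ + D) β‖ = ‖(y - Φ β) - D β‖ := by rw [add_apply, sub_add_eq_sub_sub]
    _ ≤ ‖y - Φ β‖ + ‖D‖ * ‖β‖ := (norm_sub_le _ _).trans (by gcongr; exact D.le_opNorm β)
    _ ≤ ‖y - Φ β‖ + c * ‖β‖ ^ 2 := by
      rw [sq, ← mul_assoc]; gcongr

variable [InnerProductSpace ℝ E]

theorem norm_rankOne_perturbation {r : F} (hr : r ≠ 0) (β : E) {c : ℝ} (hc : 0 ≤ c) :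
    ‖(innerSL ℝ β).smulRight (-(c / ‖r‖) • r)‖ = c * ‖β‖ := by
  rw [norm_smulRight_apply, innerSL_apply_norm, norm_smul, norm_neg, Real.norm_of_nonneg
    (by positivity), div_mul_cancel₀ _ (norm_ne_zero_iff.mpr hr), mul_comm]

theorem norm_sub_add_rankOne_perturbation_apply (y : F) (Φ : E →L[ℝ] F) (β : E) {c : ℝ}
    (hc : 0 ≤ c) (hβ : y ≠ Φ β) :
    ‖y - (Φ + (innerSL ℝ β).smulRight (-(c / ‖y - Φ β‖) • (y - Φ β))) β‖ =
      ‖y - Φ β‖ + c * ‖β‖ ^ 2 := by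
  set r := y - Φ β
  have hr : 0 < ‖r‖ := norm_pos_iff.mpr (sub_ne_zero.mpr hβ)
  have hshift : y - (Φ + (innerSL ℝ β).smulRight (-(c / ‖r‖) • r)) β =
      (1 + c * ‖β‖ ^ 2 / ‖r‖) • r := by
    rw [add_apply, smulRight_apply, innerSL_apply_apply, real_inner_self_eq_norm_sq, smul_smul,
      add_smul, one_smul, mul_neg, neg_smul, sub_add_eq_sub_sub, sub_neg_eq_add]
    congr 2
    ring
  rw [hshift, norm_smul, Real.norm_of_nonneg (by positivity), add_mul, one_mul,
    div_mul_cancel₀ _ hr.ne']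

theorem isGreatest_norm_sub_add_apply (y : F) (Φ : E →L[ℝ] F) (β : E) {c : ℝ} (hc : 0 ≤ c)
    (hβ : y ≠ Φ β) :
    IsGreatest ((fun D : E →L[ℝ] F => ‖y - (Φ + D) β‖) '' {D | ‖D‖ ≤ c * ‖β‖})
      (‖y - Φ β‖ + c * ‖β‖ ^ 2) := by
  refine ⟨⟨_, ?_, norm_sub_add_rankOne_perturbation_apply y Φ β hc hβ⟩, ?_⟩
  · exact (norm_rankOne_perturbation (sub_ne_zero.mpr hβ) β hc).le
  · rintro _ ⟨D, hD, rfl⟩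
    exact norm_sub_add_apply_le y Φ D β hD

end WorstCase

/-- For the uncertainty set `𝒰₁(β) = {ΔΦ : ‖ΔΦ‖₂ ≤ c‖β‖₂}` (operator
norm), for every `β` with `y ≠ Φβ` the worst-case loss
`max_{ΔΦ ∈ 𝒰₁} ‖y − (Φ+ΔΦ)β‖₂` equals `‖y − Φβ‖₂ + c‖β‖₂²` (the maximum is
attained). Consequently, when `y ≠ Φβ` for all `β`, the robust regression problem
`min_β max_{ΔΦ ∈ 𝒰₁} ‖y − (Φ+ΔΦ)β‖₂` is equivalent to the `L2`-regularized
problem `min_β { ‖y − Φβ‖₂ + c‖β‖₂² }` (same minimizers and values). -/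
theorem stmt_3 (n p : ℕ) (y : EuclideanSpace ℝ (Fin n))
    (Φ : EuclideanSpace ℝ (Fin p) →L[ℝ] EuclideanSpace ℝ (Fin n))
    (c : ℝ) (hc : 0 ≤ c) :
    (∀ β : EuclideanSpace ℝ (Fin p), y ≠ Φ β →
      IsGreatest ((fun D : EuclideanSpace ℝ (Fin p) →L[ℝ] EuclideanSpace ℝ (Fin n) =>
          ‖y - (Φ + D) β‖) '' {D | ‖D‖ ≤ c * ‖β‖})
        (‖y - Φ β‖ + c * ‖β‖ ^ 2)) ∧
    ((∀ β : EuclideanSpace ℝ (Fin p), y ≠ Φ β) →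
      ∀ β₀ : EuclideanSpace ℝ (Fin p),
        ((∀ β, sSup ((fun D : EuclideanSpace ℝ (Fin p) →L[ℝ] EuclideanSpace ℝ (Fin n) =>
              ‖y - (Φ + D) β₀‖) '' {D | ‖D‖ ≤ c * ‖β₀‖}) ≤
            sSup ((fun D : EuclideanSpace ℝ (Fin p) →L[ℝ] EuclideanSpace ℝ (Fin n) =>
              ‖y - (Φ + D) β‖) '' {D | ‖D‖ ≤ c * ‖β‖})) ↔
          (∀ β, ‖y - Φ β₀‖ + c * ‖β₀‖ ^ 2 ≤ ‖y - Φ β‖ + c * ‖β‖ ^ 2))) := by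
  refine ⟨fun β hβ => isGreatest_norm_sub_add_apply y Φ β hc hβ, fun hall β₀ => ?_⟩
  have hsup (β : EuclideanSpace ℝ (Fin p)) :
      sSup ((fun D : EuclideanSpace ℝ (Fin p) →L[ℝ] EuclideanSpace ℝ (Fin n) =>
        ‖y - (Φ + D) β‖) '' {D | ‖D‖ ≤ c * ‖β‖}) = ‖y - Φ β‖ + c * ‖β‖ ^ 2 :=
    (isGreatest_norm_sub_add_apply y Φ β hc (hall β)).csSup_eq
  simp only [hsup]
end

section
/- Let y ∈ ℝⁿ, Φ ∈ ℝ^{n×p}, c ≥ 0, and for fixed β ∈ ℝᵖ let 𝒰₂ = {(ΔΦ₁,…,ΔΦ_p) : ‖ΔΦᵢ‖₂ ≤ c|βᵢ| for each i}, where ΔΦᵢ ∈ ℝⁿ are the columns of ΔΦ. Then max_{ΔΦ ∈ 𝒰₂} ‖y − (Φ + ΔΦ)β‖₂ = ‖y − Φβ‖₂ + c∑ᵢ βᵢ² = ‖y − Φβ‖₂ + c‖β‖₂², assuming y ≠ Φβ. -/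
/-- For the column-wise uncertainty set
`𝒰₂ = {(ΔΦ₁,…,ΔΦ_p) : ‖ΔΦᵢ‖₂ ≤ c|βᵢ|}` and `y ≠ Φβ`,
`max_{ΔΦ ∈ 𝒰₂} ‖y − (Φ + ΔΦ)β‖₂ = ‖y − Φβ‖₂ + c∑ᵢ βᵢ² = ‖y − Φβ‖₂ + c‖β‖₂²`. -/
theorem stmt_4 (n p : ℕ) (y : EuclideanSpace ℝ (Fin n))
    (Φ : EuclideanSpace ℝ (Fin p) →L[ℝ] EuclideanSpace ℝ (Fin n))
    (β : EuclideanSpace ℝ (Fin p)) (c : ℝ) (hc : 0 ≤ c) (hne : y ≠ Φ β) :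
    IsGreatest ((fun D : Fin p → EuclideanSpace ℝ (Fin n) =>
        ‖y - (Φ β + ∑ i, β i • D i)‖) '' {D | ∀ i, ‖D i‖ ≤ c * |β i|})
      (‖y - Φ β‖ + c * ∑ i, (β i) ^ 2) ∧
    ‖y - Φ β‖ + c * ∑ i, (β i) ^ 2 = ‖y - Φ β‖ + c * ‖β‖ ^ 2 := by
  set v := y - Φ β with hv
  have hv0 : v ≠ 0 := sub_ne_zero.mpr hne
  have hr : (0:ℝ) < ‖v‖ := norm_pos_iff.mpr hv0
  set S : ℝ := ∑ i, (β i) ^ 2 with hS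
  have hS0 : 0 ≤ S := Finset.sum_nonneg fun i _ => sq_nonneg _
  constructor
  · constructor
    · -- attainment
      refine ⟨fun i => (-(c * β i) * ‖v‖⁻¹) • v, ?_, ?_⟩
      · intro i
        rw [norm_smul]
        simp only [norm_mul, norm_neg, norm_inv, norm_norm, Real.norm_eq_abs]
        rw [abs_of_nonneg hc, abs_norm, mul_assoc, inv_mul_cancel₀ hr.ne', mul_one]
      · have hsum : (∑ i, β i • ((-(c * β i) * ‖v‖⁻¹) • v))
            = (-(c * S) * ‖v‖⁻¹) • v := by
          simp only [smul_smul]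
          rw [← Finset.sum_smul]
          congr 1
          calc ∑ i, β i * (-(c * β i) * ‖v‖⁻¹)
              = ∑ i, (β i ^ 2) * (-c * ‖v‖⁻¹) :=
                Finset.sum_congr rfl fun i _ => by ring
            _ = S * (-c * ‖v‖⁻¹) := by rw [← Finset.sum_mul]
            _ = -(c * S) * ‖v‖⁻¹ := by ring
        simp only [hsum]
        have : y - (Φ β + (-(c * S) * ‖v‖⁻¹) • v) = (1 + c * S * ‖v‖⁻¹) • v := by
          rw [hv]; module
        rw [this, norm_smul, Real.norm_eq_abs]
        have hpos : 0 ≤ 1 + c * S * ‖v‖⁻¹ := by positivity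
        rw [abs_of_nonneg hpos]
        field_simp
    · -- upper bound
      rintro x ⟨D, hD, rfl⟩
      simp only
      have h1 : y - (Φ β + ∑ i, β i • D i) = v - ∑ i, β i • D i := by
        rw [hv]; abel
      rw [h1]
      refine (norm_sub_le _ _).trans ?_
      gcongr
      refine (norm_sum_le _ _).trans ?_
      rw [Finset.mul_sum]
      refine Finset.sum_le_sum fun i _ => ?_
      rw [norm_smul, Real.norm_eq_abs]
      calc |β i| * ‖D i‖ ≤ |β i| * (c * |β i|) := by
            exact mul_le_mul_of_nonneg_left (hD i) (abs_nonneg _)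
        _ = c * (β i)^2 := by rw [← sq_abs]; ring
  · have hnb : ‖β‖ ^ 2 = S := by
      rw [EuclideanSpace.norm_eq, Real.sq_sqrt (by positivity)]
      simp [Real.norm_eq_abs, sq_abs, hS]
    rw [hnb]
end

section
/- Let y ∈ ℝⁿ, Φ ∈ ℝ^{n×p}, and fixed nonnegative constants c₁,…,c_p. Let 𝒰 = {(ΔΦ₁,…,ΔΦ_p) : ‖ΔΦᵢ‖₂ ≤ cᵢ for each i}. Then for every β ∈ ℝᵖ with y ≠ Φβ, max_{ΔΦ ∈ 𝒰} ‖y − (Φ + ΔΦ)β‖₂ = ‖y − Φβ‖₂ + ∑ᵢ cᵢ|βᵢ|. In particular, with all cᵢ = c, the robust regression problem is equivalent to the Lasso problem min_β { ‖y − Φβ‖₂ + c‖β‖₁ }. -/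
/-!
The triangle inequality bounds `‖r - ∑ i, βᵢ • Dᵢ‖` by `‖r‖ + ∑ i, cᵢ |βᵢ|` whenever `‖Dᵢ‖ ≤ cᵢ`.
The bound is attained by pushing every column against the residual: with `u = r / ‖r‖` and
`Dᵢ = -cᵢ sign(βᵢ) u` the perturbation adds `(∑ i, cᵢ |βᵢ|) u` to `r`, which is parallel to `r`.
-/

open Finset

lemma abs_coe_sign_le_one {α : Type*} [Ring α] [LinearOrder α] [IsStrictOrderedRing α] (x : α) :
    |(SignType.sign x : α)| ≤ 1 := by
  rcases lt_trichotomy x 0 with hx | rfl | hx <;> simp [*]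

variable {ι E : Type*} [NormedAddCommGroup E] [NormedSpace ℝ E] {c : ι → ℝ} {r : E}

lemma norm_inv_norm_smul_self (hr : r ≠ 0) : ‖‖r‖⁻¹ • r‖ = 1 := by
  rw [norm_smul, norm_inv, norm_norm, inv_mul_cancel₀ (norm_ne_zero_iff.mpr hr)]

noncomputable def worstPerturbation (c β : ι → ℝ) (r : E) (i : ι) : E :=
  (-(c i * SignType.sign (β i))) • ‖r‖⁻¹ • r

lemma norm_worstPerturbation_le (hc : ∀ i, 0 ≤ c i) (β : ι → ℝ) (r : E) (i : ι) :
    ‖worstPerturbation c β r i‖ ≤ c i := by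
  have hu : ‖‖r‖⁻¹ • r‖ ≤ 1 := by
    rcases eq_or_ne r 0 with rfl | hr
    · simp
    · rw [norm_inv_norm_smul_self hr]
  rw [worstPerturbation, norm_smul, norm_neg, norm_mul, Real.norm_eq_abs, Real.norm_eq_abs,
    abs_of_nonneg (hc i), mul_assoc]
  exact mul_le_of_le_one_right (hc i) (mul_le_one₀ (abs_coe_sign_le_one _) (norm_nonneg _) hu)

variable [Fintype ι]

lemma norm_sub_sum_smul_le (r : E) (β : ι → ℝ) {D : ι → E}
    (hD : ∀ i, ‖D i‖ ≤ c i) : ‖r - ∑ i, β i • D i‖ ≤ ‖r‖ + ∑ i, c i * |β i| := by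
  refine (norm_sub_le _ _).trans (add_le_add_right ?_ _)
  refine (norm_sum_le _ _).trans (sum_le_sum fun i _ => ?_)
  rw [norm_smul, Real.norm_eq_abs, mul_comm]
  exact mul_le_mul_of_nonneg_right (hD i) (abs_nonneg _)

lemma sum_smul_worstPerturbation (β : ι → ℝ) (r : E) :
    (∑ i, β i • worstPerturbation c β r i : E) = (-∑ i, c i * |β i|) • ‖r‖⁻¹ • r := by
  simp only [worstPerturbation, smul_smul, ← sum_smul]
  congr 1
  rw [← sum_neg_distrib, sum_mul]
  exact sum_congr rfl fun i _ => by rw [← sign_mul_self (β i)]; ring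

lemma norm_sub_sum_smul_worstPerturbation (hc : ∀ i, 0 ≤ c i) (β : ι → ℝ) (hr : r ≠ 0) :
    ‖r - ∑ i, β i • worstPerturbation c β r i‖ = ‖r‖ + ∑ i, c i * |β i| := by
  have hS : 0 ≤ ∑ i, c i * |β i| := sum_nonneg fun i _ => mul_nonneg (hc i) (abs_nonneg _)
  have hparallel : r - ∑ i, β i • worstPerturbation c β r i
      = (‖r‖ + ∑ i, c i * |β i|) • ‖r‖⁻¹ • r := by
    rw [sum_smul_worstPerturbation, add_smul, smul_inv_smul₀ (norm_ne_zero_iff.mpr hr),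
      neg_smul, sub_neg_eq_add]
  rw [hparallel, norm_smul, norm_inv_norm_smul_self hr, mul_one, Real.norm_of_nonneg (by positivity)]

theorem isGreatest_norm_sub_sum_smul (hc : ∀ i, 0 ≤ c i) (β : ι → ℝ) (hr : r ≠ 0) :
    IsGreatest ((fun D : ι → E => ‖r - ∑ i, β i • D i‖) '' {D | ∀ i, ‖D i‖ ≤ c i})
      (‖r‖ + ∑ i, c i * |β i|) := by
  refine ⟨⟨worstPerturbation c β r, norm_worstPerturbation_le hc β r,
    norm_sub_sum_smul_worstPerturbation hc β hr⟩, ?_⟩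
  rintro _ ⟨D, hD, rfl⟩
  exact norm_sub_sum_smul_le r β hD

/-- For the column-wise uncertainty set
`𝒰 = {(ΔΦ₁,…,ΔΦ_p) : ‖ΔΦᵢ‖₂ ≤ cᵢ}` with fixed `cᵢ ≥ 0`, for every `β` with
`y ≠ Φβ` the worst case equals `‖y − Φβ‖₂ + ∑ᵢ cᵢ|βᵢ|`; in particular with all
`cᵢ = c` the robust regression problem is equivalent to the Lasso problem
`min_β { ‖y − Φβ‖₂ + c‖β‖₁ }`. -/
theorem stmt_5 (n p : ℕ) (y : EuclideanSpace ℝ (Fin n))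
    (Φ : EuclideanSpace ℝ (Fin p) →L[ℝ] EuclideanSpace ℝ (Fin n))
    (cs : Fin p → ℝ) (hcs : ∀ i, 0 ≤ cs i) :
    (∀ β : EuclideanSpace ℝ (Fin p), y ≠ Φ β →
      IsGreatest ((fun D : Fin p → EuclideanSpace ℝ (Fin n) =>
          ‖y - (Φ β + ∑ i, β i • D i)‖) '' {D | ∀ i, ‖D i‖ ≤ cs i})
        (‖y - Φ β‖ + ∑ i, cs i * |β i|)) ∧
    (∀ c : ℝ, 0 ≤ c → (∀ i, cs i = c) →
      (∀ β : EuclideanSpace ℝ (Fin p), y ≠ Φ β) →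
      ∀ β₀ : EuclideanSpace ℝ (Fin p),
        ((∀ β, sSup ((fun D : Fin p → EuclideanSpace ℝ (Fin n) =>
              ‖y - (Φ β₀ + ∑ i, β₀ i • D i)‖) '' {D | ∀ i, ‖D i‖ ≤ cs i}) ≤
            sSup ((fun D : Fin p → EuclideanSpace ℝ (Fin n) =>
              ‖y - (Φ β + ∑ i, β i • D i)‖) '' {D | ∀ i, ‖D i‖ ≤ cs i})) ↔
          (∀ β, ‖y - Φ β₀‖ + c * ∑ i, |β₀ i| ≤ ‖y - Φ β‖ + c * ∑ i, |β i|))) := by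
  have robust : ∀ β : EuclideanSpace ℝ (Fin p), y ≠ Φ β →
      IsGreatest ((fun D : Fin p → EuclideanSpace ℝ (Fin n) =>
          ‖y - (Φ β + ∑ i, β i • D i)‖) '' {D | ∀ i, ‖D i‖ ≤ cs i})
        (‖y - Φ β‖ + ∑ i, cs i * |β i|) := fun β hβ => by
    simpa only [sub_add_eq_sub_sub] using
      isGreatest_norm_sub_sum_smul hcs (fun i => β i) (sub_ne_zero.mpr hβ)
  refine ⟨robust, fun c _ hc hne β₀ => ?_⟩
  have hsSup := fun β => (robust β (hne β)).csSup_eq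
  simp only [hsSup]
  simp only [hc, ← mul_sum]
end

section
/- Let y ∈ ℝⁿ, Φ ∈ ℝ^{n×p} and c ∈ ℝᵖ with c ≥ 0, and consider the uncertainty set of ΔΦ ∈ ℝ^{n×p} with column norms ‖ΔΦᵢ‖₂ ≤ cᵢ. Then for all β ∈ ℝᵖ there exists ΔΦ* in this uncertainty set, with columns ΔΦᵢ* = −cᵢ·sgn(βᵢ)·u, where u = (y−Φβ)/‖y−Φβ‖₂ if y ≠ Φβ and u is any unit vector otherwise, such that ‖y − (Φ + ΔΦ*)β‖₂ ≥ ‖y − Φβ‖₂ + ∑ᵢ cᵢ|βᵢ| (with equality when y ≠ Φβ). -/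
/-- Lower-bound (attainment) side of the Lasso equivalence: for
column norm bounds `cᵢ ≥ 0`, there exists a perturbation `ΔΦ*` in the
uncertainty set (columns `ΔΦᵢ* = −cᵢ·sgn(βᵢ)·u`, with `u` the unit residual
direction when `y ≠ Φβ` and any unit vector otherwise) such that
`‖y − (Φ + ΔΦ*)β‖₂ ≥ ‖y − Φβ‖₂ + ∑ᵢ cᵢ|βᵢ|`, with equality when `y ≠ Φβ`. -/
theorem stmt_14 (n p : ℕ) (hn : 0 < n) (y : EuclideanSpace ℝ (Fin n))
    (Φ : EuclideanSpace ℝ (Fin p) →L[ℝ] EuclideanSpace ℝ (Fin n))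
    (β : EuclideanSpace ℝ (Fin p))
    (cs : Fin p → ℝ) (hcs : ∀ i, 0 ≤ cs i) :
    ∃ (D : Fin p → EuclideanSpace ℝ (Fin n)) (u : EuclideanSpace ℝ (Fin n)),
      ‖u‖ = 1 ∧
      (y ≠ Φ β → u = ‖y - Φ β‖⁻¹ • (y - Φ β)) ∧
      (∀ i, D i = (-(cs i * Real.sign (β i))) • u) ∧
      (∀ i, ‖D i‖ ≤ cs i) ∧
      ‖y - Φ β‖ + ∑ i, cs i * |β i| ≤ ‖y - (Φ β + ∑ i, β i • D i)‖ ∧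
      (y ≠ Φ β →
        ‖y - (Φ β + ∑ i, β i • D i)‖ = ‖y - Φ β‖ + ∑ i, cs i * |β i|) := by
  classical
  set S := ∑ i, cs i * |β i| with hSdef
  have hS0 : 0 ≤ S := Finset.sum_nonneg fun i _ => mul_nonneg (hcs i) (abs_nonneg _)
  have hsgn : ∀ x : ℝ, Real.sign x * x = |x| := by
    intro x
    rcases lt_trichotomy x 0 with h | h | h
    · rw [Real.sign_of_neg h, abs_of_neg h]; ring
    · simp [h]
    · rw [Real.sign_of_pos h, abs_of_pos h]; ring
  have hsgnabs : ∀ x : ℝ, |Real.sign x| ≤ 1 := by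
    intro x
    rcases lt_trichotomy x 0 with h | h | h
    · rw [Real.sign_of_neg h]; norm_num
    · simp [h]
    · rw [Real.sign_of_pos h]; norm_num
  obtain ⟨u, hu1, hu2⟩ : ∃ u : EuclideanSpace ℝ (Fin n), ‖u‖ = 1 ∧
      (y ≠ Φ β → u = ‖y - Φ β‖⁻¹ • (y - Φ β)) := by
    by_cases h : y = Φ β
    · refine ⟨EuclideanSpace.single ⟨0, hn⟩ (1 : ℝ), by simp, fun h' => absurd h h'⟩
    · refine ⟨‖y - Φ β‖⁻¹ • (y - Φ β), ?_, fun _ => rfl⟩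
      have hne : y - Φ β ≠ 0 := sub_ne_zero.mpr h
      rw [norm_smul, norm_inv, norm_norm, inv_mul_cancel₀ (norm_ne_zero_iff.mpr hne)]
  refine ⟨fun i => (-(cs i * Real.sign (β i))) • u, u, hu1, hu2, fun i => rfl, ?_, ?_⟩
  · intro i
    simp only []
    rw [norm_smul, hu1, mul_one, Real.norm_eq_abs, abs_neg, abs_mul,
      abs_of_nonneg (hcs i)]
    calc cs i * |Real.sign (β i)| ≤ cs i * 1 :=
          mul_le_mul_of_nonneg_left (hsgnabs _) (hcs i)
      _ = cs i := mul_one _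
  ·
    have hsum : ∑ i, β i • ((-(cs i * Real.sign (β i))) • u) = (-S) • u := by
      have : ∀ i, β i • ((-(cs i * Real.sign (β i))) • u)
          = (-(cs i * |β i|)) • u := by
        intro i
        rw [smul_smul]
        congr 1
        rw [← hsgn (β i)]; ring
      rw [Finset.sum_congr rfl fun i _ => this i, ← Finset.sum_smul]
      congr 1
      rw [hSdef, ← Finset.sum_neg_distrib]
    have hrw : y - (Φ β + ∑ i, β i • ((-(cs i * Real.sign (β i))) • u))
        = (y - Φ β) + S • u := by
      rw [hsum]; module
    rw [hrw]
    by_cases h : y = Φ β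
    · constructor
      · rw [h, sub_self, zero_add, norm_zero, zero_add, norm_smul, hu1, mul_one,
          Real.norm_eq_abs, abs_of_nonneg hS0]
      · exact fun h' => absurd h h'
    · have hne : y - Φ β ≠ 0 := sub_ne_zero.mpr h
      have hr : 0 < ‖y - Φ β‖ := norm_pos_iff.mpr hne
      have hkey : ‖(y - Φ β) + S • u‖ = ‖y - Φ β‖ + S := by
        rw [hu2 h, smul_smul]
        have : (y - Φ β) + (S * ‖y - Φ β‖⁻¹) • (y - Φ β)
            = (1 + S * ‖y - Φ β‖⁻¹) • (y - Φ β) := by module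
        rw [this, norm_smul, Real.norm_eq_abs,
          abs_of_nonneg (by positivity), add_mul, one_mul, mul_assoc,
          inv_mul_cancel₀ hr.ne', mul_one]
      exact ⟨le_of_eq hkey.symm, fun _ => hkey⟩
end

section
/- Let g : ℝᵖ → ℝ be defined by g(β) = max_{ΔΦ ∈ 𝒰(β)} ‖y − (Φ + ΔΦ)β‖₂ with 𝒰(β) = {ΔΦ : ‖ΔΦ‖₂ ≤ c‖β‖₂} (operator norm), and let h(β) = ‖y − Φβ‖₂ + c‖β‖₂². Then g(β) = h(β) for all β with Φβ ≠ y, and g(β) ≤ h(β) always; consequently argmin_β g ⊆ argmin_β h whenever the minimizer of h satisfies Φβ ≠ y, and the two optimization problems have the same optimal value in that case. -/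
set_option synthInstance.maxHeartbeats 1000000 in
/-- Let `g(β) = max_{‖ΔΦ‖₂ ≤ c‖β‖₂} ‖y − (Φ + ΔΦ)β‖₂` (operator
norm) and `h(β) = ‖y − Φβ‖₂ + c‖β‖₂²`. Then `g(β) = h(β)` whenever `Φβ ≠ y`,
and `g(β) ≤ h(β)` always; consequently, if some minimizer `βh` of `h` satisfies
`Φβh ≠ y`, then every minimizer of `g` is a minimizer of `h`, and the two
problems have the same optimal value. -/
theorem stmt_18 (n p : ℕ) (y : EuclideanSpace ℝ (Fin n))
    (Φ : EuclideanSpace ℝ (Fin p) →L[ℝ] EuclideanSpace ℝ (Fin n))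
    (c : ℝ) (hc : 0 ≤ c)
    (g h : EuclideanSpace ℝ (Fin p) → ℝ)
    (hg : ∀ β, g β = sSup ((fun D : EuclideanSpace ℝ (Fin p) →L[ℝ] EuclideanSpace ℝ (Fin n) =>
      ‖y - (Φ + D) β‖) '' {D | ‖D‖ ≤ c * ‖β‖}))
    (hh : ∀ β, h β = ‖y - Φ β‖ + c * ‖β‖ ^ 2) :
    (∀ β, Φ β ≠ y → g β = h β) ∧
    (∀ β, g β ≤ h β) ∧
    (∀ βh : EuclideanSpace ℝ (Fin p), (∀ β, h βh ≤ h β) → Φ βh ≠ y →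
      ({β | ∀ β', g β ≤ g β'} ⊆ {β | ∀ β', h β ≤ h β'} ∧
        ∀ βg : EuclideanSpace ℝ (Fin p), (∀ β', g βg ≤ g β') → g βg = h βh)) := by
  -- nonnegativity of h
  have hnn : ∀ β, 0 ≤ h β := by
    intro β; rw [hh]
    positivity
  -- every element of the image is ≤ h β
  have hub : ∀ β, ∀ x ∈ ((fun D : EuclideanSpace ℝ (Fin p) →L[ℝ] EuclideanSpace ℝ (Fin n) =>
      ‖y - (Φ + D) β‖) '' {D | ‖D‖ ≤ c * ‖β‖}), x ≤ h β := by
    intro β x hx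
    obtain ⟨D, hD, rfl⟩ := hx
    have h1 : y - (Φ + D) β = (y - Φ β) - D β := by
      simp [ContinuousLinearMap.add_apply]; abel
    calc ‖y - (Φ + D) β‖ = ‖(y - Φ β) - D β‖ := by rw [h1]
      _ ≤ ‖y - Φ β‖ + ‖D β‖ := norm_sub_le _ _
      _ ≤ ‖y - Φ β‖ + (c * ‖β‖) * ‖β‖ := by
          gcongr
          exact le_trans (D.le_opNorm β) (by gcongr; exact hD)
      _ = h β := by rw [hh]; ring
  have hbdd : ∀ β, BddAbove ((fun D : EuclideanSpace ℝ (Fin p) →L[ℝ] EuclideanSpace ℝ (Fin n) =>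
      ‖y - (Φ + D) β‖) '' {D | ‖D‖ ≤ c * ‖β‖}) := fun β => ⟨h β, hub β⟩
  -- g ≤ h always
  have hle : ∀ β, g β ≤ h β := by
    intro β; rw [hg]
    exact Real.sSup_le (hub β) (hnn β)
  -- lower bound: if there is a unit u with y - Φ β = ‖y - Φ β‖ • u, then h β ≤ g β
  have hgeu : ∀ β (u : EuclideanSpace ℝ (Fin n)), ‖u‖ = 1 →
      y - Φ β = ‖y - Φ β‖ • u → h β ≤ g β := by
    intro β u hu hru
    set D : EuclideanSpace ℝ (Fin p) →L[ℝ] EuclideanSpace ℝ (Fin n) :=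
      -(ContinuousLinearMap.smulRight (innerSL ℝ β) (c • u)) with hDdef
    have hDnorm : ‖D‖ = c * ‖β‖ := by
      rw [hDdef, norm_neg, ContinuousLinearMap.norm_smulRight_apply,
        innerSL_apply_norm, norm_smul, hu, Real.norm_eq_abs, abs_of_nonneg hc]
      ring
    have hDmem : D ∈ {D : EuclideanSpace ℝ (Fin p) →L[ℝ] EuclideanSpace ℝ (Fin n) |
        ‖D‖ ≤ c * ‖β‖} := le_of_eq hDnorm
    have hDβ : D β = -((c * ‖β‖ ^ 2) • u) := by
      rw [hDdef]
      simp only [ContinuousLinearMap.neg_apply,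
        ContinuousLinearMap.smulRight_apply, innerSL_apply_apply]
      rw [real_inner_self_eq_norm_sq, smul_smul, mul_comm]
    have hval : ‖y - (Φ + D) β‖ = h β := by
      have h2 : y - (Φ + D) β = (y - Φ β) + (c * ‖β‖ ^ 2) • u := by
        rw [ContinuousLinearMap.add_apply, hDβ]; abel
      rw [h2, hh]
      conv_lhs => rw [hru]
      rw [← add_smul, norm_smul, hu, mul_one, Real.norm_eq_abs,
        abs_of_nonneg (by positivity)]
    rw [hg]
    calc h β = ‖y - (Φ + D) β‖ := hval.symm
      _ ≤ _ := le_csSup (hbdd β) ⟨D, hDmem, rfl⟩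
  -- g = h whenever a unit vector exists in the codomain
  have heq : ∀ (u : EuclideanSpace ℝ (Fin n)), ‖u‖ = 1 → ∀ β, g β = h β := by
    intro u hu β
    refine le_antisymm (hle β) ?_
    by_cases hr : y - Φ β = 0
    · exact hgeu β u hu (by rw [hr, norm_zero, zero_smul])
    · exact hgeu β (‖y - Φ β‖⁻¹ • (y - Φ β)) (norm_smul_inv_norm hr)
        (by rw [smul_smul, mul_inv_cancel₀ (norm_ne_zero_iff.2 hr), one_smul])
  refine ⟨?_, hle, ?_⟩
  · intro β hβ
    have hr : y - Φ β ≠ 0 := sub_ne_zero.2 (Ne.symm hβ)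
    exact heq (‖y - Φ β‖⁻¹ • (y - Φ β)) (norm_smul_inv_norm hr) β
  · intro βh hmin hne
    have hr : y - Φ βh ≠ 0 := sub_ne_zero.2 (Ne.symm hne)
    have heq' := heq (‖y - Φ βh‖⁻¹ • (y - Φ βh)) (norm_smul_inv_norm hr)
    constructor
    · intro β hβ β'
      simpa [heq'] using hβ β'
    · intro βg hβg
      have h1 : g βg ≤ g βh := hβg βh
      have h2 : h βh ≤ h βg := hmin βg
      simp only [heq'] at h1 ⊢
      exact le_antisymm h1 h2
end
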